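/- Consistency of the Lagrange–Gauss–Radau identity used in the uniqueness proof: if u, v are polynomials of degree ≤ k on I_n with Q_n(⟨u' − v, φ⟩) + ⟨u⁺(t_{n-1}), φ⁺(t_{n-1})⟩ = 0 for all polynomial test functions φ of degree ≤ k with values in a finite-dimensional inner product space, then at each Gauss–Radau node t_{n,l}, u'(t_{n,l}) − v(t_{n,l}) = c_{n,l} u⁺(t_{n-1}) with c_{n,l} = 2 τ_n^{-1} (ω_l)^{-1} ξ_{n,l}(t_{n-1}), where ξ_{n,l} is the l-th Lagrange basis polynomial at the Gauss–Radau nodes. -/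

import Mathlib

/-!
Test the variational identity with `φ = ξ_l • m`. Since `ξ_l` has degree `k` and
`ξ_l(t_μ) = δ_{lμ}`, the quadrature collapses to the single node `t_l`, leaving
`⟪((b - a)/2) ω_l (u' - v)(t_l) + ξ_l(a) u(a), m⟫ = 0` for every `m`; taking `m` to be
the vector itself shows that it vanishes.
-/

open Finset Polynomial

theorem Lagrange.eval_basis_eq_prod {F ι : Type*} [Field F] [DecidableEq ι] (s : Finset ι)
    (v : ι → F) (i : ι) (x : F) :
    (Lagrange.basis s v i).eval x = ∏ j ∈ s.erase i, (x - v j) / (v i - v j) := by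
  rw [Lagrange.basis, eval_prod]
  refine prod_congr rfl fun j _ => ?_
  simp only [Lagrange.basisDivisor, eval_mul, eval_C, eval_sub, eval_X]
  ring

theorem Lagrange.sum_eval_basis_smul {F ι M : Type*} [Field F] [DecidableEq ι]
    [AddCommMonoid M] [Module F M] {s : Finset ι} {v : ι → F} (hv : Set.InjOn v s) {i : ι}
    (hi : i ∈ s) (f : ι → M) :
    ∑ j ∈ s, (Lagrange.basis s v i).eval (v j) • f j = f i := by
  rw [sum_eq_single_of_mem i hi fun j hj hji => by
    rw [Lagrange.eval_basis_of_ne hji.symm hj, zero_smul], Lagrange.eval_basis_self hv hi, one_smul]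

theorem Polynomial.sum_fin_pow_smul_coeff_smul {R M : Type*} [CommSemiring R] [AddCommMonoid M]
    [Module R M] {p : R[X]} {n : ℕ} (hp : p.natDegree < n) (x : R) (m : M) :
    ∑ j : Fin n, x ^ (j : ℕ) • (p.coeff j • m) = p.eval x • m := by
  simp only [smul_smul, ← sum_smul, eval_eq_sum_range' hp,
    Fin.sum_univ_eq_sum_range (fun j => x ^ j * p.coeff j), mul_comm]

theorem neg_eq_inv_mul_smul_of_smul_add_smul_eq_zero {K E : Type*} [Field K] [AddCommGroup E]
    [Module K E] {c d : K} {x y : E} (hc : c ≠ 0) (h : c • x + d • y = 0) :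
    -x = (c⁻¹ * d) • y := by
  rw [mul_smul, eq_comm, inv_smul_eq_iff₀ hc, smul_neg, eq_neg_iff_add_eq_zero, add_comm, h]

theorem gauss_radau_lagrange_identity_general
    {H : Type*} [NormedAddCommGroup H] [InnerProductSpace ℝ H]
    (k : ℕ) (a b : ℝ) (hab : a < b)
    (t : Fin (k + 1) → ℝ) (htinj : Function.Injective t)
    (ω : Fin (k + 1) → ℝ) (hω : ∀ μ, 0 < ω μ)
    (ξ : Fin (k + 1) → ℝ → ℝ)
    (hξ : ∀ l x, ξ l x = ∏ i ∈ Finset.univ.erase l, (x - t i) / (t l - t i))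
    (u v : ℝ → H)
    (hvar : ∀ Φ : Fin (k + 1) → H,
      (b - a) / 2 * (∑ μ, ω μ *
          (inner ℝ (deriv u (t μ) - v (t μ)) (∑ j : Fin (k + 1), (t μ) ^ (j : ℕ) • Φ j) : ℝ))
        + (inner ℝ (u a) (∑ j : Fin (k + 1), a ^ (j : ℕ) • Φ j) : ℝ) = 0) :
    ∀ l, v (t l) - deriv u (t l) = ((2 / ((b - a) * ω l)) * ξ l a) • u a := by
  intro l
  set P := Lagrange.basis univ t l
  have hinj : Set.InjOn t (univ : Finset (Fin (k + 1))) := htinj.injOn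
  have hξP : ξ l a = P.eval a := by rw [hξ, Lagrange.eval_basis_eq_prod]
  have hdeg : P.natDegree < k + 1 := by
    rw [Lagrange.natDegree_basis hinj (mem_univ l), card_univ, Fintype.card_fin]
    omega
  have hquad : ∀ w : Fin (k + 1) → H, ∀ m : H,
      ∑ μ, ω μ * inner ℝ (w μ) (P.eval (t μ) • m) = ω l * inner ℝ (w l) m := by
    intro w m
    simpa [real_inner_smul_right, mul_left_comm] using
      Lagrange.sum_eval_basis_smul hinj (mem_univ l) (fun μ => ω μ * inner ℝ (w μ) m)
  have hweak : ∀ m : H,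
      inner ℝ (((b - a) / 2 * ω l) • (deriv u (t l) - v (t l)) + ξ l a • u a) m = 0 := by
    intro m
    have h := hvar fun j => P.coeff j • m
    simp only [P.sum_fin_pow_smul_coeff_smul hdeg] at h
    rw [hquad (fun μ => deriv u (t μ) - v (t μ)), real_inner_smul_right] at h
    rw [inner_add_left, real_inner_smul_left, real_inner_smul_left, hξP]
    linarith
  have hc : (b - a) / 2 * ω l ≠ 0 := (mul_pos (by linarith) (hω l)).ne'
  rw [← neg_sub, neg_eq_inv_mul_smul_of_smul_add_smul_eq_zero hc (inner_self_eq_zero.mp (hweak _))]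
  congr 1
  field_simp

/-- Gauss–Radau/Lagrange identity used in the uniqueness proof. -/
theorem gauss_radau_lagrange_identity
    {H : Type*} [NormedAddCommGroup H] [InnerProductSpace ℝ H] [FiniteDimensional ℝ H]
    (k : ℕ) (a b : ℝ) (hab : a < b)
    (t : Fin (k + 1) → ℝ) (ht : ∀ μ, t μ ∈ Set.Ioc a b) (htinj : Function.Injective t)
    (ω : Fin (k + 1) → ℝ) (hω : ∀ μ, 0 < ω μ)
    (ξ : Fin (k + 1) → ℝ → ℝ)
    (hξ : ∀ l x, ξ l x = ∏ i ∈ Finset.univ.erase l, (x - t i) / (t l - t i))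
    (U V : Fin (k + 1) → H) (u v : ℝ → H)
    (hu : ∀ x, u x = ∑ j : Fin (k + 1), x ^ (j : ℕ) • U j)
    (hv : ∀ x, v x = ∑ j : Fin (k + 1), x ^ (j : ℕ) • V j)
    (hvar : ∀ Φ : Fin (k + 1) → H,
      (b - a) / 2 * (∑ μ, ω μ *
          (inner ℝ (deriv u (t μ) - v (t μ)) (∑ j : Fin (k + 1), (t μ) ^ (j : ℕ) • Φ j) : ℝ))
        + (inner ℝ (u a) (∑ j : Fin (k + 1), a ^ (j : ℕ) • Φ j) : ℝ) = 0) :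
    ∀ l, v (t l) - deriv u (t l) = ((2 / ((b - a) * ω l)) * ξ l a) • u a :=
  gauss_radau_lagrange_identity_general k a b hab t htinj ω hω ξ hξ u v hvar
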